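/- For n ≥ 1 and any proper chain c over [n] (c ≠ [n]), the explosion scheme fails semantically: there exist formulas φ, ψ and a valuation with some world i in which φ ∧ₙ ¬_c φ is true and ψ is false, hence (φ ∧ₙ ¬_c φ) →ₙ ψ is false in world i. -/

import Mathlib

/-! In a world `i ∉ c` the weak negation `¬_c` does not flip anything, so `φ ∧ₙ ¬_c φ` takes the
value of `φ` there. Taking two distinct atoms, true and false respectively, refutes explosion. -/

inductive Formula (n : ℕ) : Type
  | atom : ℕ → Formula n
  | bot : Finset (Fin n) → Formula n
  | neg : Finset (Fin n) → Formula n → Formula n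
  | imp : Formula n → Formula n → Formula n

def Formula.eval {n : ℕ} (v : ℕ → Fin n → Bool) (i : Fin n) : Formula n → Bool
  | .atom p => v p i
  | .bot c => if i ∈ c then false else true
  | .neg c φ => if i ∈ c then !(φ.eval v i) else φ.eval v i
  | .imp φ ψ => !(φ.eval v i) || ψ.eval v i

def Formula.and {n : ℕ} (φ ψ : Formula n) : Formula n :=
  .neg Finset.univ (.imp φ (.neg Finset.univ ψ))

def Formula.or {n : ℕ} (φ ψ : Formula n) : Formula n :=
  .imp (.neg Finset.univ φ) ψ

def Formula.iff {n : ℕ} (φ ψ : Formula n) : Formula n :=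
  Formula.and (.imp φ ψ) (.imp ψ φ)

def Tautology {n : ℕ} (φ : Formula n) : Prop :=
  ∀ (v : ℕ → Fin n → Bool) (i : Fin n), φ.eval v i = true

namespace Formula

variable {n : ℕ} (v : ℕ → Fin n → Bool) (i : Fin n)

@[simp]
theorem eval_and (φ ψ : Formula n) : (φ.and ψ).eval v i = (φ.eval v i && ψ.eval v i) := by
  simp only [Formula.and, eval, Finset.mem_univ, if_true]
  cases φ.eval v i <;> cases ψ.eval v i <;> rfl

theorem eval_neg_of_notMem {c : Finset (Fin n)} (hi : i ∉ c) (φ : Formula n) :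
    (neg c φ).eval v i = φ.eval v i := by
  simp only [eval, hi, if_false]

theorem eval_and_neg_of_notMem {c : Finset (Fin n)} (hi : i ∉ c) (φ : Formula n) :
    (φ.and (neg c φ)).eval v i = φ.eval v i := by
  rw [eval_and, eval_neg_of_notMem v i hi, Bool.and_self]

end Formula

theorem explosion_fails_general (n : ℕ) (c : Finset (Fin n))
    (hc : c ≠ Finset.univ) :
    ∃ (φ ψ : Formula n) (v : ℕ → Fin n → Bool) (i : Fin n),
      (Formula.and φ (.neg c φ)).eval v i = true ∧
      ψ.eval v i = false ∧
      (Formula.imp (Formula.and φ (.neg c φ)) ψ).eval v i = false := by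
  obtain ⟨i, hi⟩ : ∃ i, i ∉ c := not_forall.mp (mt Finset.eq_univ_iff_forall.mpr hc)
  let v : ℕ → Fin n → Bool := fun p _ => p == 0
  have hφ : ((Formula.atom 0).and (.neg c (.atom 0))).eval v i = true :=
    Formula.eval_and_neg_of_notMem v i hi _
  have hψ : (Formula.atom 1 : Formula n).eval v i = false := rfl
  refine ⟨.atom 0, .atom 1, v, i, hφ, hψ, ?_⟩
  rw [Formula.eval, hφ, hψ]
  rfl

theorem explosion_fails (n : ℕ) (hn : 1 ≤ n) (c : Finset (Fin n))
    (hc : c ≠ Finset.univ) :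
    ∃ (φ ψ : Formula n) (v : ℕ → Fin n → Bool) (i : Fin n),
      (Formula.and φ (.neg c φ)).eval v i = true ∧
      ψ.eval v i = false ∧
      (Formula.imp (Formula.and φ (.neg c φ)) ψ).eval v i = false :=
  explosion_fails_general n c hc
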